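/- With v₁(ζ), v₂(ζ) as above and h the signature-(2,2) Hermitian form h(w,z) = w₁ conj(z₁) + w₂ conj(z₂) − w₃ conj(z₃) − w₄ conj(z₄): if x₁ > 0 and x₁² > x₂² + x₃² + x₄² (where xⱼ = Re ζⱼ), then h is positive definite on the subspace span{v₁(ζ), v₂(ζ)} ⊂ ℂ⁴. -/
import Mathlib


/-- The Hermitian form of signature (2,2) on ℂ⁴. -/
noncomputable def hform (w z : Fin 4 → ℂ) : ℂ :=
  w 0 * star (z 0) + w 1 * star (z 1) - w 2 * star (z 2) - w 3 * star (z 3)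

/-- The first spanning vector of the 2-plane Π(ζ). -/
noncomputable def v₁ (ζ : Fin 4 → ℂ) : Fin 4 → ℂ :=
  ![1 + ζ 0 + ζ 1, ζ 2 + Complex.I * ζ 3, 1 - ζ 0 - ζ 1, -(ζ 2) - Complex.I * ζ 3]

/-- The second spanning vector of the 2-plane Π(ζ). -/
noncomputable def v₂ (ζ : Fin 4 → ℂ) : Fin 4 → ℂ :=
  ![ζ 2 - Complex.I * ζ 3, 1 + ζ 0 - ζ 1, -(ζ 2) + Complex.I * ζ 3, 1 - ζ 0 + ζ 1]

/-- If ζ lies in the tube domain, then the signature-(2,2) Hermitian form is positive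
definite on span{v₁(ζ), v₂(ζ)}. -/
theorem stmt_12 (ζ : Fin 4 → ℂ)
    (hx1 : 0 < (ζ 0).re)
    (hx : (ζ 1).re ^ 2 + (ζ 2).re ^ 2 + (ζ 3).re ^ 2 < (ζ 0).re ^ 2) :
    ∀ v ∈ Submodule.span ℂ {v₁ ζ, v₂ ζ}, v ≠ 0 → 0 < (hform v v).re := by
  intro v hv hv0
  rw [Submodule.mem_span_pair] at hv
  obtain ⟨a, b, rfl⟩ := hv
  have key : (hform (a • v₁ ζ + b • v₂ ζ) (a • v₁ ζ + b • v₂ ζ)).re =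
      4*((a.re^2+a.im^2)*((ζ 0).re+(ζ 1).re) + (b.re^2+b.im^2)*((ζ 0).re-(ζ 1).re)
        + 2*((a.re*b.re+a.im*b.im)*(ζ 2).re - (a.im*b.re-a.re*b.im)*(ζ 3).re)) := by
    simp only [hform, v₁, v₂, Pi.add_apply, Pi.smul_apply, smul_eq_mul,
      Matrix.cons_val_zero, Matrix.cons_val_one, Matrix.head_cons,
      Matrix.cons_val_two, Matrix.tail_cons, Matrix.cons_val_three,
      Complex.star_def, map_add, map_sub, map_mul, map_one, Complex.conj_I,
      Complex.sub_re, Complex.add_re, Complex.mul_re, Complex.mul_im,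
      Complex.sub_im, Complex.add_im, Complex.one_re, Complex.one_im,
      Complex.neg_re, Complex.neg_im, Complex.I_re, Complex.I_im,
      Complex.conj_re, Complex.conj_im, map_neg]
    ring
  rw [key]
  have hab : a.re^2+a.im^2+b.re^2+b.im^2 > 0 := by
    rcases eq_or_ne a 0 with ha | ha
    · rcases eq_or_ne b 0 with hb | hb
      · exact absurd (by simp [ha, hb]) hv0
      · have : b.re^2 + b.im^2 > 0 := by
          have := Complex.normSq_pos.2 hb
          simpa [Complex.normSq_apply, sq] using this
        nlinarith [sq_nonneg a.re, sq_nonneg a.im]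
    · have : a.re^2 + a.im^2 > 0 := by
        have := Complex.normSq_pos.2 ha
        simpa [Complex.normSq_apply, sq] using this
      nlinarith [sq_nonneg b.re, sq_nonneg b.im]
  set x0 := (ζ 0).re; set x1 := (ζ 1).re; set x2 := (ζ 2).re; set x3 := (ζ 3).re
  set a1 := a.re; set a2 := a.im; set b1 := b.re; set b2 := b.im
  nlinarith [sq_nonneg ((x0+x1)*a1 + x2*b1 + x3*b2),
    sq_nonneg ((x0+x1)*a2 + x2*b2 - x3*b1),
    sq_nonneg ((x0-x1)*b1 + x2*a1 - x3*a2),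
    sq_nonneg ((x0-x1)*b2 + x2*a2 + x3*a1),
    mul_pos hx1 hx1, sq_nonneg a1, sq_nonneg a2, sq_nonneg b1, sq_nonneg b2,
    mul_pos (sub_pos.2 hx) hab]
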